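/- The group Γ₂(2,4) = {γ ∈ Sp(4,ℤ) : γ ≡ 1 (mod 2), diag(B) ≡ diag(C) ≡ 0 (mod 4)} is a normal subgroup of Γ₀⁰(2) = {γ ∈ Sp(4,ℤ) : B ≡ C ≡ 0 (mod 2)}. -/
import Mathlib
open Matrix

namespace Gamma24Aux

abbrev Sp2 := Matrix.symplecticGroup (Fin 2) ℤ
abbrev M4 := Matrix (Fin 2 ⊕ Fin 2) (Fin 2 ⊕ Fin 2) ℤ

lemma inv_ll (g : Sp2) (a b : Fin 2) :
    (↑(g⁻¹) : M4) (Sum.inl a) (Sum.inl b) = (g : M4) (Sum.inr b) (Sum.inr a) := by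
  rw [SymplecticGroup.coe_inv]
  fin_cases a <;> fin_cases b <;>
    simp [Matrix.J, Matrix.mul_apply, Fintype.sum_sum_type, Fin.sum_univ_two,
      Matrix.fromBlocks, Matrix.one_apply]

lemma inv_lr (g : Sp2) (a b : Fin 2) :
    (↑(g⁻¹) : M4) (Sum.inl a) (Sum.inr b) = -(g : M4) (Sum.inl b) (Sum.inr a) := by
  rw [SymplecticGroup.coe_inv]
  fin_cases a <;> fin_cases b <;>
    simp [Matrix.J, Matrix.mul_apply, Fintype.sum_sum_type, Fin.sum_univ_two,
      Matrix.fromBlocks, Matrix.one_apply]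

lemma inv_rl (g : Sp2) (a b : Fin 2) :
    (↑(g⁻¹) : M4) (Sum.inr a) (Sum.inl b) = -(g : M4) (Sum.inr b) (Sum.inl a) := by
  rw [SymplecticGroup.coe_inv]
  fin_cases a <;> fin_cases b <;>
    simp [Matrix.J, Matrix.mul_apply, Fintype.sum_sum_type, Fin.sum_univ_two,
      Matrix.fromBlocks, Matrix.one_apply]

lemma inv_rr (g : Sp2) (a b : Fin 2) :
    (↑(g⁻¹) : M4) (Sum.inr a) (Sum.inr b) = (g : M4) (Sum.inl b) (Sum.inl a) := by
  rw [SymplecticGroup.coe_inv]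
  fin_cases a <;> fin_cases b <;>
    simp [Matrix.J, Matrix.mul_apply, Fintype.sum_sum_type, Fin.sum_univ_two,
      Matrix.fromBlocks, Matrix.one_apply]

lemma Bsym (h : Sp2) (h1 : ∀ i j, (2:ℤ) ∣ (h : M4) i j - (1 : M4) i j)
    (hB : ∀ i : Fin 2, (4:ℤ) ∣ (h : M4) (Sum.inl i) (Sum.inr i)) :
    (4:ℤ) ∣ (h : M4) (Sum.inl 0) (Sum.inr 1) - (h : M4) (Sum.inl 1) (Sum.inr 0) := by
  have hm := (SymplecticGroup.mem_iff).mp h.2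
  have e := congrFun (congrFun hm (Sum.inl 0)) (Sum.inl 1)
  simp [Matrix.J, Matrix.mul_apply, Fintype.sum_sum_type, Fin.sum_univ_two,
    Matrix.fromBlocks, Matrix.one_apply] at e
  obtain ⟨a, ha⟩ := h1 (Sum.inl 0) (Sum.inl 0)
  obtain ⟨d, hd⟩ := h1 (Sum.inl 1) (Sum.inl 1)
  obtain ⟨x, hx⟩ := h1 (Sum.inl 1) (Sum.inl 0)
  obtain ⟨w, hw⟩ := h1 (Sum.inl 0) (Sum.inl 1)
  obtain ⟨p, hp⟩ := h1 (Sum.inl 0) (Sum.inr 1)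
  obtain ⟨q, hq⟩ := h1 (Sum.inl 1) (Sum.inr 0)
  obtain ⟨v, hv⟩ := hB 0
  obtain ⟨u, hu⟩ := hB 1
  simp [Matrix.one_apply] at ha hd hx hw hp hq
  have hA00 : (h : M4) (Sum.inl 0) (Sum.inl 0) = 2*a+1 := by omega
  have hA11 : (h : M4) (Sum.inl 1) (Sum.inl 1) = 2*d+1 := by omega
  have hA10 : (h : M4) (Sum.inl 1) (Sum.inl 0) = 2*x := by omega
  have hA01 : (h : M4) (Sum.inl 0) (Sum.inl 1) = 2*w := by omega
  have hB01 : (h : M4) (Sum.inl 0) (Sum.inr 1) = 2*p := by omega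
  have hB10 : (h : M4) (Sum.inl 1) (Sum.inr 0) = 2*q := by omega
  rw [hA00, hA11, hA10, hA01, hB01, hB10, hv, hu] at e
  rw [hB01, hB10]
  exact ⟨a*q - p*d + 2*w*u - 2*v*x, by linear_combination e⟩

lemma Csym (h : Sp2) (h1 : ∀ i j, (2:ℤ) ∣ (h : M4) i j - (1 : M4) i j)
    (hC : ∀ i : Fin 2, (4:ℤ) ∣ (h : M4) (Sum.inr i) (Sum.inl i)) :
    (4:ℤ) ∣ (h : M4) (Sum.inr 0) (Sum.inl 1) - (h : M4) (Sum.inr 1) (Sum.inl 0) := by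
  have hm := (SymplecticGroup.mem_iff).mp h.2
  have e := congrFun (congrFun hm (Sum.inr 0)) (Sum.inr 1)
  simp [Matrix.J, Matrix.mul_apply, Fintype.sum_sum_type, Fin.sum_univ_two,
    Matrix.fromBlocks, Matrix.one_apply] at e
  obtain ⟨a, ha⟩ := h1 (Sum.inr 0) (Sum.inr 0)
  obtain ⟨d, hd⟩ := h1 (Sum.inr 1) (Sum.inr 1)
  obtain ⟨x, hx⟩ := h1 (Sum.inr 1) (Sum.inr 0)
  obtain ⟨w, hw⟩ := h1 (Sum.inr 0) (Sum.inr 1)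
  obtain ⟨p, hp⟩ := h1 (Sum.inr 0) (Sum.inl 1)
  obtain ⟨q, hq⟩ := h1 (Sum.inr 1) (Sum.inl 0)
  obtain ⟨v, hv⟩ := hC 0
  obtain ⟨u, hu⟩ := hC 1
  simp [Matrix.one_apply] at ha hd hx hw hp hq
  have hD00 : (h : M4) (Sum.inr 0) (Sum.inr 0) = 2*a+1 := by omega
  have hD11 : (h : M4) (Sum.inr 1) (Sum.inr 1) = 2*d+1 := by omega
  have hD10 : (h : M4) (Sum.inr 1) (Sum.inr 0) = 2*x := by omega
  have hD01 : (h : M4) (Sum.inr 0) (Sum.inr 1) = 2*w := by omega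
  have hC01 : (h : M4) (Sum.inr 0) (Sum.inl 1) = 2*p := by omega
  have hC10 : (h : M4) (Sum.inr 1) (Sum.inl 0) = 2*q := by omega
  rw [hD00, hD11, hD10, hD01, hC01, hC10, hv, hu] at e
  rw [hC01, hC10]
  exact ⟨a*q - p*d + 2*w*u - 2*v*x, by linear_combination -e⟩

lemma mul2 {a b : ℤ} (ha : (2:ℤ) ∣ a) (hb : (2:ℤ) ∣ b) : (4:ℤ) ∣ a * b := by
  obtain ⟨x, rfl⟩ := ha; obtain ⟨y, rfl⟩ := hb; exact ⟨x*y, by ring⟩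

/-- the defining set of H -/
def PH (γ : Sp2) : Prop :=
  (∀ i j, (2 : ℤ) ∣ ((γ : M4) i j - (1 : M4) i j)) ∧
  (∀ i : Fin 2, (4 : ℤ) ∣ (γ : M4) (Sum.inl i) (Sum.inr i)) ∧
  (∀ i : Fin 2, (4 : ℤ) ∣ (γ : M4) (Sum.inr i) (Sum.inl i))

def PG (γ : Sp2) : Prop :=
  (∀ i j : Fin 2, (2 : ℤ) ∣ (γ : M4) (Sum.inl i) (Sum.inr j)) ∧
  (∀ i j : Fin 2, (2 : ℤ) ∣ (γ : M4) (Sum.inr i) (Sum.inl j))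

lemma coe_mul (g1 g2 : Sp2) : (↑(g1 * g2) : M4) = (g1 : M4) * (g2 : M4) := rfl
lemma coe_one : ((1 : Sp2) : M4) = 1 := rfl

lemma key_identity (g1 g2 : Sp2) :
    (↑(g1 * g2) : M4) = ((g1:M4) - 1) * ((g2:M4) - 1) + ((g1:M4) - 1) + ((g2:M4) - 1) + 1 := by
  rw [coe_mul]; noncomm_ring

def Gsub : Subgroup Sp2 where
  carrier := {γ | PG γ}
  one_mem' := by
    constructor <;> intro i j <;> simp [coe_one, Matrix.one_apply]
  mul_mem' := by
    rintro g1 g2 ⟨hB1, hC1⟩ ⟨hB2, hC2⟩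
    constructor <;> intro i j <;>
      rw [coe_mul, Matrix.mul_apply] <;>
      simp only [Fintype.sum_sum_type, Fin.sum_univ_two]
    · exact dvd_add (dvd_add ((hB2 0 j).mul_left _) ((hB2 1 j).mul_left _))
        (dvd_add ((hB1 i 0).mul_right _) ((hB1 i 1).mul_right _))
    · exact dvd_add (dvd_add ((hC1 i 0).mul_right _) ((hC1 i 1).mul_right _))
        (dvd_add ((hC2 0 j).mul_left _) ((hC2 1 j).mul_left _))
  inv_mem' := by
    rintro g ⟨hB, hC⟩
    constructor <;> intro i j
    · rw [inv_lr]; exact (hB j i).neg_right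
    · rw [inv_rl]; exact (hC j i).neg_right

def Hsub : Subgroup Sp2 where
  carrier := {γ | PH γ}
  one_mem' := by
    refine ⟨fun i j => by simp [coe_one], fun i => ?_, fun i => ?_⟩ <;>
      simp [coe_one, Matrix.one_apply]
  mul_mem' := by
    rintro g1 g2 ⟨h1, hB1, hC1⟩ ⟨h2, hB2, hC2⟩
    have key := key_identity g1 g2
    have hent : ∀ p q, (↑(g1*g2) : M4) p q =
        (((g1:M4) - 1) * ((g2:M4) - 1)) p q + ((g1:M4) - 1) p q + ((g2:M4) - 1) p q
          + (1:M4) p q := by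
      intro p q; rw [key]; simp [Matrix.add_apply]
    have hY1 : ∀ p q, (2:ℤ) ∣ ((g1:M4) - 1) p q := by
      intro p q; simpa using h1 p q
    have hY2 : ∀ p q, (2:ℤ) ∣ ((g2:M4) - 1) p q := by
      intro p q; simpa using h2 p q
    have hprod2 : ∀ p q, (2:ℤ) ∣ (((g1:M4) - 1) * ((g2:M4) - 1)) p q := by
      intro p q; rw [Matrix.mul_apply]
      exact Finset.dvd_sum fun k _ => (hY1 p k).mul_right _
    have hprod4 : ∀ p q, (4:ℤ) ∣ (((g1:M4) - 1) * ((g2:M4) - 1)) p q := by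
      intro p q; rw [Matrix.mul_apply]
      exact Finset.dvd_sum fun k _ => mul2 (hY1 p k) (hY2 k q)
    refine ⟨fun p q => ?_, fun i => ?_, fun i => ?_⟩
    · have := hent p q
      have : (↑(g1*g2) : M4) p q - (1:M4) p q =
          (((g1:M4) - 1) * ((g2:M4) - 1)) p q + ((g1:M4) - 1) p q + ((g2:M4) - 1) p q := by
        rw [this]; ring
      rw [this]
      exact dvd_add (dvd_add (hprod2 p q) (hY1 p q)) (hY2 p q)
    · rw [hent]
      have e1 : ((g1:M4) - 1) (Sum.inl i) (Sum.inr i) = (g1:M4) (Sum.inl i) (Sum.inr i) := by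
        simp [Matrix.sub_apply, Matrix.one_apply]
      have e2 : ((g2:M4) - 1) (Sum.inl i) (Sum.inr i) = (g2:M4) (Sum.inl i) (Sum.inr i) := by
        simp [Matrix.sub_apply, Matrix.one_apply]
      have e3 : (1:M4) (Sum.inl i) (Sum.inr i) = 0 := by simp [Matrix.one_apply]
      rw [e1, e2, e3, add_zero]
      exact dvd_add (dvd_add (hprod4 _ _) (hB1 i)) (hB2 i)
    · rw [hent]
      have e1 : ((g1:M4) - 1) (Sum.inr i) (Sum.inl i) = (g1:M4) (Sum.inr i) (Sum.inl i) := by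
        simp [Matrix.sub_apply, Matrix.one_apply]
      have e2 : ((g2:M4) - 1) (Sum.inr i) (Sum.inl i) = (g2:M4) (Sum.inr i) (Sum.inl i) := by
        simp [Matrix.sub_apply, Matrix.one_apply]
      have e3 : (1:M4) (Sum.inr i) (Sum.inl i) = 0 := by simp [Matrix.one_apply]
      rw [e1, e2, e3, add_zero]
      exact dvd_add (dvd_add (hprod4 _ _) (hC1 i)) (hC2 i)
  inv_mem' := by
    rintro g ⟨h1, hB, hC⟩
    refine ⟨fun p q => ?_, fun i => ?_, fun i => ?_⟩
    · rcases p with a | a <;> rcases q with b | b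
      · rw [inv_ll]
        have := h1 (Sum.inr b) (Sum.inr a)
        simp only [Matrix.one_apply] at this ⊢
        simpa [eq_comm] using this
      · rw [inv_lr]
        have := h1 (Sum.inl b) (Sum.inr a)
        simp [Matrix.one_apply] at this ⊢
        omega
      · rw [inv_rl]
        have := h1 (Sum.inr b) (Sum.inl a)
        simp [Matrix.one_apply] at this ⊢
        omega
      · rw [inv_rr]
        have := h1 (Sum.inl b) (Sum.inl a)
        simp only [Matrix.one_apply] at this ⊢
        simpa [eq_comm] using this
    · rw [inv_lr]; exact (hB i).neg_right
    · rw [inv_rl]; exact (hC i).neg_right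

lemma conj_mem (h : Sp2) (hh : PH h) (g : Sp2) (hg : PG g) : PH (g * h * g⁻¹) := by
  obtain ⟨h1, hB, hC⟩ := hh
  obtain ⟨gB, gC⟩ := hg
  have hgi : (g:M4) * (↑(g⁻¹):M4) = 1 := by
    rw [← coe_mul, mul_inv_cancel]; rfl
  have key : (↑(g*h*g⁻¹):M4) = (g:M4) * ((h:M4) - 1) * (↑(g⁻¹):M4) + 1 := by
    have e : (g:M4) * ((h:M4) - 1) * (↑(g⁻¹):M4) =
        (g:M4) * (h:M4) * (↑(g⁻¹):M4) - (g:M4) * (↑(g⁻¹):M4) := by noncomm_ring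
    rw [coe_mul, coe_mul, e, hgi]
    abel
  -- mod 2 condition
  have hY : ∀ p q, (2:ℤ) ∣ ((h:M4) - 1) p q := by intro p q; simpa using h1 p q
  refine ⟨fun p q => ?_, fun i => ?_, fun i => ?_⟩
  · have e : (↑(g*h*g⁻¹) : M4) p q - (1:M4) p q =
        ((g:M4) * (((h:M4) - 1) * (↑(g⁻¹):M4))) p q := by
      rw [key, ← Matrix.mul_assoc]; simp [Matrix.add_apply]
    rw [e, Matrix.mul_apply]
    refine Finset.dvd_sum fun k _ => Dvd.dvd.mul_left ?_ _
    rw [Matrix.mul_apply]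
    exact Finset.dvd_sum fun l _ => (hY k l).mul_right _
  · rw [key]
    have one0 : ((g:M4) * ((h:M4) - 1) * (↑(g⁻¹):M4) + 1) (Sum.inl i) (Sum.inr i)
        = ((g:M4) * ((h:M4) - 1) * (↑(g⁻¹):M4)) (Sum.inl i) (Sum.inr i) := by
      simp [Matrix.add_apply, Matrix.one_apply]
    rw [one0]
    simp only [Matrix.mul_apply, Fintype.sum_sum_type, Fin.sum_univ_two, Matrix.sub_apply,
      Matrix.one_apply, inv_ll, inv_lr, inv_rl, inv_rr]
    simp only [Sum.inl.injEq, Sum.inr.injEq, reduceCtorEq, if_false, if_true,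
      Fin.isValue, sub_zero, show ((0:Fin 2) = 1) = False by simp, show ((1:Fin 2) = 0) = False by simp,
      if_false, ite_true, ite_false, ite_self, eq_self_iff_true]
    obtain ⟨b0, hb0⟩ := gB i 0
    obtain ⟨b1, hb1⟩ := gB i 1
    have ep00 := h1 (Sum.inl 0) (Sum.inl 0)
    simp [Matrix.one_apply] at ep00
    obtain ⟨p00, hp000⟩ := ep00
    have hp00 : (h:M4) (Sum.inl 0) (Sum.inl 0) = 2*p00+1 := by omega
    have ep01 := h1 (Sum.inl 0) (Sum.inl 1)
    simp [Matrix.one_apply] at ep01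
    obtain ⟨p01, hp01⟩ := ep01
    have ep10 := h1 (Sum.inl 1) (Sum.inl 0)
    simp [Matrix.one_apply] at ep10
    obtain ⟨p10, hp10⟩ := ep10
    have ep11 := h1 (Sum.inl 1) (Sum.inl 1)
    simp [Matrix.one_apply] at ep11
    obtain ⟨p11, hp110⟩ := ep11
    have hp11 : (h:M4) (Sum.inl 1) (Sum.inl 1) = 2*p11+1 := by omega
    obtain ⟨q0, hq0⟩ := hB 0
    obtain ⟨q1, hq1⟩ := hB 1
    have eq10 := h1 (Sum.inl 1) (Sum.inr 0)
    simp [Matrix.one_apply] at eq10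
    obtain ⟨q10, hq10⟩ := eq10
    obtain ⟨s, hs⟩ := Bsym h h1 hB
    have hq01 : (h:M4) (Sum.inl 0) (Sum.inr 1) = 2*q10 + 4*s := by omega
    have et00 := h1 (Sum.inr 0) (Sum.inr 0)
    simp [Matrix.one_apply] at et00
    obtain ⟨t00, ht000⟩ := et00
    have ht00 : (h:M4) (Sum.inr 0) (Sum.inr 0) = 2*t00+1 := by omega
    have et01 := h1 (Sum.inr 0) (Sum.inr 1)
    simp [Matrix.one_apply] at et01
    obtain ⟨t01, ht01⟩ := et01
    have et10 := h1 (Sum.inr 1) (Sum.inr 0)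
    simp [Matrix.one_apply] at et10
    obtain ⟨t10, ht10⟩ := et10
    have et11 := h1 (Sum.inr 1) (Sum.inr 1)
    simp [Matrix.one_apply] at et11
    obtain ⟨t11, ht110⟩ := et11
    have ht11 : (h:M4) (Sum.inr 1) (Sum.inr 1) = 2*t11+1 := by omega
    rw [hb0, hb1, hp00, hp01, hp10, hp11, hq0, hq1, hq10, hq01, ht00, ht01, ht10, ht11]
    refine ⟨-(b0*(((g:M4) (Sum.inl i) (Sum.inl 0))*p00 + ((g:M4) (Sum.inl i) (Sum.inl 1))*p10
        + b0*((h:M4) (Sum.inr 0) (Sum.inl 0)) + b1*((h:M4) (Sum.inr 1) (Sum.inl 0))))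
      - (b1*(((g:M4) (Sum.inl i) (Sum.inl 0))*p01 + ((g:M4) (Sum.inl i) (Sum.inl 1))*p11
        + b0*((h:M4) (Sum.inr 0) (Sum.inl 1)) + b1*((h:M4) (Sum.inr 1) (Sum.inl 1))))
      + ((g:M4) (Sum.inl i) (Sum.inl 0))*((g:M4) (Sum.inl i) (Sum.inl 0))*q0
      + ((g:M4) (Sum.inl i) (Sum.inl 1))*((g:M4) (Sum.inl i) (Sum.inl 1))*q1
      + ((g:M4) (Sum.inl i) (Sum.inl 0))*((g:M4) (Sum.inl i) (Sum.inl 1))*(q10 + s)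
      + ((g:M4) (Sum.inl i) (Sum.inl 0))*(b0*t00 + b1*t10)
      + ((g:M4) (Sum.inl i) (Sum.inl 1))*(b0*t01 + b1*t11), by ring⟩
  · rw [key]
    have one0 : ((g:M4) * ((h:M4) - 1) * (↑(g⁻¹):M4) + 1) (Sum.inr i) (Sum.inl i)
        = ((g:M4) * ((h:M4) - 1) * (↑(g⁻¹):M4)) (Sum.inr i) (Sum.inl i) := by
      simp [Matrix.add_apply, Matrix.one_apply]
    rw [one0]
    simp only [Matrix.mul_apply, Fintype.sum_sum_type, Fin.sum_univ_two, Matrix.sub_apply,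
      Matrix.one_apply, inv_ll, inv_lr, inv_rl, inv_rr]
    simp only [Sum.inl.injEq, Sum.inr.injEq, reduceCtorEq, if_false, if_true,
      Fin.isValue, sub_zero, show ((0:Fin 2) = 1) = False by simp, show ((1:Fin 2) = 0) = False by simp,
      if_false, ite_true, ite_false, ite_self, eq_self_iff_true]
    obtain ⟨c0, hc0⟩ := gC i 0
    obtain ⟨c1, hc1⟩ := gC i 1
    have ep00 := h1 (Sum.inl 0) (Sum.inl 0)
    simp [Matrix.one_apply] at ep00
    obtain ⟨p00, hp000⟩ := ep00
    have hp00 : (h:M4) (Sum.inl 0) (Sum.inl 0) = 2*p00+1 := by omega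
    have ep01 := h1 (Sum.inl 0) (Sum.inl 1)
    simp [Matrix.one_apply] at ep01
    obtain ⟨p01, hp01⟩ := ep01
    have ep10 := h1 (Sum.inl 1) (Sum.inl 0)
    simp [Matrix.one_apply] at ep10
    obtain ⟨p10, hp10⟩ := ep10
    have ep11 := h1 (Sum.inl 1) (Sum.inl 1)
    simp [Matrix.one_apply] at ep11
    obtain ⟨p11, hp110⟩ := ep11
    have hp11 : (h:M4) (Sum.inl 1) (Sum.inl 1) = 2*p11+1 := by omega
    obtain ⟨r0, hr0⟩ := hC 0
    obtain ⟨r1, hr1⟩ := hC 1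
    have er10 := h1 (Sum.inr 1) (Sum.inl 0)
    simp [Matrix.one_apply] at er10
    obtain ⟨r10, hr10⟩ := er10
    obtain ⟨s2, hs2⟩ := Csym h h1 hC
    have hr01 : (h:M4) (Sum.inr 0) (Sum.inl 1) = 2*r10 + 4*s2 := by omega
    have et00 := h1 (Sum.inr 0) (Sum.inr 0)
    simp [Matrix.one_apply] at et00
    obtain ⟨t00, ht000⟩ := et00
    have ht00 : (h:M4) (Sum.inr 0) (Sum.inr 0) = 2*t00+1 := by omega
    have et01 := h1 (Sum.inr 0) (Sum.inr 1)
    simp [Matrix.one_apply] at et01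
    obtain ⟨t01, ht01⟩ := et01
    have et10 := h1 (Sum.inr 1) (Sum.inr 0)
    simp [Matrix.one_apply] at et10
    obtain ⟨t10, ht10⟩ := et10
    have et11 := h1 (Sum.inr 1) (Sum.inr 1)
    simp [Matrix.one_apply] at et11
    obtain ⟨t11, ht110⟩ := et11
    have ht11 : (h:M4) (Sum.inr 1) (Sum.inr 1) = 2*t11+1 := by omega
    rw [hc0, hc1, hp00, hp01, hp10, hp11, hr0, hr1, hr10, hr01, ht00, ht01, ht10, ht11]
    refine ⟨c0*p00*((g:M4) (Sum.inr i) (Sum.inr 0)) + c1*p10*((g:M4) (Sum.inr i) (Sum.inr 0))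
      + ((g:M4) (Sum.inr i) (Sum.inr 0))*((g:M4) (Sum.inr i) (Sum.inr 0))*r0
      + c0*p01*((g:M4) (Sum.inr i) (Sum.inr 1)) + c1*p11*((g:M4) (Sum.inr i) (Sum.inr 1))
      + ((g:M4) (Sum.inr i) (Sum.inr 1))*((g:M4) (Sum.inr i) (Sum.inr 1))*r1
      + ((g:M4) (Sum.inr i) (Sum.inr 0))*((g:M4) (Sum.inr i) (Sum.inr 1))*(r10 + s2)
      - (c0*(c0*((h:M4) (Sum.inl 0) (Sum.inr 0)) + c1*((h:M4) (Sum.inl 1) (Sum.inr 0))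
        + ((g:M4) (Sum.inr i) (Sum.inr 0))*t00 + ((g:M4) (Sum.inr i) (Sum.inr 1))*t10))
      - (c1*(c0*((h:M4) (Sum.inl 0) (Sum.inr 1)) + c1*((h:M4) (Sum.inl 1) (Sum.inr 1))
        + ((g:M4) (Sum.inr i) (Sum.inr 0))*t01 + ((g:M4) (Sum.inr i) (Sum.inr 1))*t11)), by ring⟩

end Gamma24Aux


open Gamma24Aux in
/-- Γ₂(2,4) = {γ ∈ Sp(4,ℤ) : γ ≡ 1 (mod 2), diag(B) ≡ diag(C) ≡ 0 (mod 4)}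
is a normal subgroup of Γ₀⁰(2) = {γ ∈ Sp(4,ℤ) : B ≡ C ≡ 0 (mod 2)}. -/
theorem gamma2_24_normal_in_gamma00_2 :
    ∃ H G : Subgroup (Matrix.symplecticGroup (Fin 2) ℤ),
      ((H : Set (Matrix.symplecticGroup (Fin 2) ℤ)) =
        {γ : Matrix.symplecticGroup (Fin 2) ℤ |
          (∀ i j, (2 : ℤ) ∣
            ((γ : Matrix (Fin 2 ⊕ Fin 2) (Fin 2 ⊕ Fin 2) ℤ) i j
              - (1 : Matrix (Fin 2 ⊕ Fin 2) (Fin 2 ⊕ Fin 2) ℤ) i j)) ∧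
          (∀ i : Fin 2, (4 : ℤ) ∣
            (γ : Matrix (Fin 2 ⊕ Fin 2) (Fin 2 ⊕ Fin 2) ℤ) (Sum.inl i) (Sum.inr i)) ∧
          (∀ i : Fin 2, (4 : ℤ) ∣
            (γ : Matrix (Fin 2 ⊕ Fin 2) (Fin 2 ⊕ Fin 2) ℤ) (Sum.inr i) (Sum.inl i))}) ∧
      ((G : Set (Matrix.symplecticGroup (Fin 2) ℤ)) =
        {γ : Matrix.symplecticGroup (Fin 2) ℤ |
          (∀ i j : Fin 2, (2 : ℤ) ∣
            (γ : Matrix (Fin 2 ⊕ Fin 2) (Fin 2 ⊕ Fin 2) ℤ) (Sum.inl i) (Sum.inr j)) ∧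
          (∀ i j : Fin 2, (2 : ℤ) ∣
            (γ : Matrix (Fin 2 ⊕ Fin 2) (Fin 2 ⊕ Fin 2) ℤ) (Sum.inr i) (Sum.inl j))}) ∧
      H ≤ G ∧
      (∀ h ∈ H, ∀ g ∈ G, g * h * g⁻¹ ∈ H) := by
  refine ⟨Hsub, Gsub, rfl, rfl, ?_, ?_⟩
  · rintro γ ⟨h1, hB, hC⟩
    refine ⟨fun i j => ?_, fun i j => ?_⟩
    · have := h1 (Sum.inl i) (Sum.inr j)
      simpa [Matrix.one_apply] using this
    · have := h1 (Sum.inr i) (Sum.inl j)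
      simpa [Matrix.one_apply] using this
  · exact fun h hh g hg => conj_mem h hh g hg
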